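/- Let φ be a two-sided geometric probability mass function on ℤ with parameters p, q ∈ (0,1). Then its Shannon entropy satisfies H(φ) − H_∞(φ) = −( p·log p/(1−p)² + q·log q/(1−q)² ) / ( 1/(1−p) + 1/(1−q) − 1 ), and this quantity is strictly less than 1. -/

import Mathlib

open Real

/-- Shannon entropy `H(p) = −∑ p(n) log p(n)`, natural logarithm. -/
noncomputable def shannonEnt (p : ℤ → ℝ) : ℝ := -∑' n, p n * Real.log (p n)

/-- Min-entropy `H_∞(p) = −log sup_n p(n)`. -/
noncomputable def minEnt (p : ℤ → ℝ) : ℝ := -Real.log (⨆ n, p n)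

/-- The two-sided geometric pmf with parameters `p, q ∈ [0,1)` and mode `m`:
`φ(n) = C·p^{n−m}` for `n ≥ m`, `φ(n) = C·q^{m−n}` for `n ≤ m`,
with `C = (1−p)(1−q)/(1−pq)` and `0⁰ = 1`. -/
noncomputable def twoSidedGeom (p q : ℝ) (m : ℤ) : ℤ → ℝ :=
  fun n =>
    (1 - p) * (1 - q) / (1 - p * q) *
      (if m ≤ n then p ^ (n - m).toNat else q ^ (m - n).toNat)

/-
Writing `C = (1-p)(1-q)/(1-pq)` for the mass at the mode, `φ = C·w` with `w = p^k` to the right and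
`w = q^k` to the left of the mode. The mode is the maximum, so `H_∞(φ) = -log C`, and
`H(φ) = -log C - C ∑ w log w`, where `∑ w log w = p log p/(1-p)² + q log q/(1-q)²` by
`∑ k r^k = r/(1-r)²`; since `∑ w = 1/(1-p) + 1/(1-q) - 1 = 1/C`, this gives the identity.
For the bound, `sinh (log r) < log r` for `r ∈ (0,1)` reads `-r log r/(1-r)² < 1/(1-r) - 1/2`,
and the two right-hand sides add up to exactly `1/C`.
-/

open Set

lemma hasSum_mul_geometric_mul_log {c r : ℝ} (hc : c ≠ 0) (hr₀ : r ≠ 0) (hr : |r| < 1) :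
    HasSum (fun k : ℕ => c * r ^ k * log (c * r ^ k))
      (c * log c / (1 - r) + c * (r * log r / (1 - r) ^ 2)) := by
  have hgeom := (hasSum_geometric_of_abs_lt_one hr).mul_left (c * log c)
  have hkgeom := (hasSum_coe_mul_geometric_of_norm_lt_one
    (by rwa [Real.norm_eq_abs])).mul_left (c * log r)
  have hterm (k : ℕ) :
      c * r ^ k * log (c * r ^ k) = c * log c * r ^ k + c * log r * (k * r ^ k) := by
    rw [log_mul hc (pow_ne_zero k hr₀), log_pow]
    ring
  rw [show c * log c / (1 - r) + c * (r * log r / (1 - r) ^ 2)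
    = c * log c * (1 - r)⁻¹ + c * log r * (r / (1 - r) ^ 2) by ring]
  simpa only [hterm] using hgeom.add hkgeom

lemma sub_inv_div_two_lt_log {x : ℝ} (hx₀ : 0 < x) (hx₁ : x < 1) : (x - x⁻¹) / 2 < log x := by
  rw [← sinh_log hx₀, sinh_lt_self_iff]
  exact log_neg hx₀ hx₁

lemma neg_mul_log_div_one_sub_sq_lt {r : ℝ} (hr₀ : 0 < r) (hr₁ : r < 1) :
    -(r * log r / (1 - r) ^ 2) < 1 / (1 - r) - 1 / 2 := by
  have hr : 0 < 1 - r := by linarith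
  have hlog := sub_inv_div_two_lt_log hr₀ hr₁
  calc -(r * log r / (1 - r) ^ 2) = -log r * (r / (1 - r) ^ 2) := by ring
    _ < (r⁻¹ - r) / 2 * (r / (1 - r) ^ 2) := by gcongr; linarith
    _ = 1 / (1 - r) - 1 / 2 := by field_simp; ring

lemma shannonEnt_comp_add_right (f : ℤ → ℝ) (m : ℤ) :
    shannonEnt (fun n => f (n + m)) = shannonEnt f :=
  congrArg Neg.neg ((Equiv.addRight m).tsum_eq fun n => f n * log (f n))

section

variable {p q : ℝ}

lemma twoSidedGeom_apply_add_mode (p q : ℝ) (m n : ℤ) :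
    twoSidedGeom p q m (n + m) = twoSidedGeom p q 0 n := by
  simp [twoSidedGeom]

lemma twoSidedGeom_zero_apply_natCast (p q : ℝ) (k : ℕ) :
    twoSidedGeom p q 0 k = (1 - p) * (1 - q) / (1 - p * q) * p ^ k := by
  simp [twoSidedGeom]

lemma twoSidedGeom_zero_apply_neg_natCast (p q : ℝ) (k : ℕ) :
    twoSidedGeom p q 0 (-k) = (1 - p) * (1 - q) / (1 - p * q) * q ^ k := by
  rcases k.eq_zero_or_pos with rfl | hk
  · simp [twoSidedGeom]
  · have hneg : ¬ (0 : ℤ) ≤ -k := by omega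
    simp only [twoSidedGeom, if_neg hneg, zero_sub, neg_neg, Int.toNat_natCast]

lemma twoSidedGeom_le_apply_mode (hp : p ∈ Icc 0 1) (hq : q ∈ Icc 0 1) (m n : ℤ) :
    twoSidedGeom p q m n ≤ twoSidedGeom p q m m := by
  have hC : 0 ≤ (1 - p) * (1 - q) / (1 - p * q) := by
    have : p * q ≤ 1 := mul_le_one₀ hp.2 hq.1 hq.2
    exact div_nonneg (mul_nonneg (by linarith [hp.2]) (by linarith [hq.2])) (by linarith)
  simp only [twoSidedGeom, le_refl, if_true, sub_self, Int.toNat_zero, pow_zero, mul_one]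
  refine mul_le_of_le_one_right hC ?_
  split_ifs
  · exact pow_le_one₀ hp.1 hp.2
  · exact pow_le_one₀ hq.1 hq.2

lemma twoSidedGeom_apply_mode (p q : ℝ) (m : ℤ) :
    twoSidedGeom p q m m = (1 - p) * (1 - q) / (1 - p * q) := by
  simp [twoSidedGeom]

lemma iSup_twoSidedGeom (hp : p ∈ Icc 0 1) (hq : q ∈ Icc 0 1) (m : ℤ) :
    ⨆ n, twoSidedGeom p q m n = twoSidedGeom p q m m :=
  le_antisymm (ciSup_le (twoSidedGeom_le_apply_mode hp hq m))
    (le_ciSup ⟨_, forall_mem_range.2 (twoSidedGeom_le_apply_mode hp hq m)⟩ m)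

lemma minEnt_twoSidedGeom (hp : p ∈ Icc 0 1) (hq : q ∈ Icc 0 1) (m : ℤ) :
    minEnt (twoSidedGeom p q m) = -log ((1 - p) * (1 - q) / (1 - p * q)) := by
  rw [minEnt, iSup_twoSidedGeom hp hq, twoSidedGeom_apply_mode]

lemma twoSidedGeom_const_mul_eq_one (hp : p ≠ 1) (hq : q ≠ 1) (hpq : p * q ≠ 1) :
    (1 - p) * (1 - q) / (1 - p * q) * (1 / (1 - p) + 1 / (1 - q) - 1) = 1 := by
  have hp' : 1 - p ≠ 0 := sub_ne_zero.2 hp.symm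
  have hq' : 1 - q ≠ 0 := sub_ne_zero.2 hq.symm
  have hpq' : 1 - p * q ≠ 0 := sub_ne_zero.2 hpq.symm
  field_simp
  ring

lemma shannonEnt_twoSidedGeom (hp : p ∈ Ioo 0 1) (hq : q ∈ Ioo 0 1) (m : ℤ) :
    shannonEnt (twoSidedGeom p q m) = -log ((1 - p) * (1 - q) / (1 - p * q)) -
      (1 - p) * (1 - q) / (1 - p * q) * (p * log p / (1 - p) ^ 2 + q * log q / (1 - q) ^ 2) := by
  have hpq : p * q < 1 := mul_lt_one_of_nonneg_of_lt_one_left hp.1.le hp.2 hq.2.le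
  have hC : (1 - p) * (1 - q) / (1 - p * q) ≠ 0 :=
    div_ne_zero (mul_ne_zero (by linarith [hp.2]) (by linarith [hq.2])) (by linarith)
  have hsum := HasSum.of_nat_of_neg
    (f := fun n => twoSidedGeom p q 0 n * log (twoSidedGeom p q 0 n))
    (by simpa only [twoSidedGeom_zero_apply_natCast] using
      hasSum_mul_geometric_mul_log hC hp.1.ne' (abs_lt.2 ⟨by linarith [hp.1], hp.2⟩))
    (by simpa only [twoSidedGeom_zero_apply_neg_natCast] using
      hasSum_mul_geometric_mul_log hC hq.1.ne' (abs_lt.2 ⟨by linarith [hq.1], hq.2⟩))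
  rw [← shannonEnt_comp_add_right _ m]
  simp only [twoSidedGeom_apply_add_mode]
  rw [shannonEnt, hsum.tsum_eq, twoSidedGeom_apply_mode]
  linear_combination -log ((1 - p) * (1 - q) / (1 - p * q)) *
    twoSidedGeom_const_mul_eq_one hp.2.ne hq.2.ne hpq.ne

end

/-- For a two-sided geometric pmf `φ` with parameters `p, q ∈ (0,1)`,
`H(φ) − H_∞(φ) = −(p log p/(1−p)² + q log q/(1−q)²)/(1/(1−p) + 1/(1−q) − 1) < 1`. -/
theorem twoSidedGeom_shannon_minEntropy_gap (p q : ℝ)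
    (hp : p ∈ Set.Ioo (0 : ℝ) 1) (hq : q ∈ Set.Ioo (0 : ℝ) 1) (m : ℤ) :
    shannonEnt (twoSidedGeom p q m) - minEnt (twoSidedGeom p q m) =
      -((p * Real.log p / (1 - p) ^ 2 + q * Real.log q / (1 - q) ^ 2) /
        (1 / (1 - p) + 1 / (1 - q) - 1)) ∧
    -((p * Real.log p / (1 - p) ^ 2 + q * Real.log q / (1 - q) ^ 2) /
        (1 / (1 - p) + 1 / (1 - q) - 1)) < 1 := by
  have hpq : p * q < 1 := mul_lt_one_of_nonneg_of_lt_one_left hp.1.le hp.2 hq.2.le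
  have hC := twoSidedGeom_const_mul_eq_one hp.2.ne hq.2.ne hpq.ne
  have hD : 0 < 1 / (1 - p) + 1 / (1 - q) - 1 := by
    have := one_lt_one_div (sub_pos.2 hp.2) (sub_lt_self 1 hp.1)
    have : 0 < 1 / (1 - q) := one_div_pos.2 (sub_pos.2 hq.2)
    linarith
  constructor
  · rw [shannonEnt_twoSidedGeom hp hq, minEnt_twoSidedGeom (Ioo_subset_Icc_self hp)
      (Ioo_subset_Icc_self hq), eq_inv_of_mul_eq_one_left hC]
    ring
  · rw [← neg_div, div_lt_one hD]
    linarith [neg_mul_log_div_one_sub_sq_lt hp.1 hp.2, neg_mul_log_div_one_sub_sq_lt hq.1 hq.2]
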